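/- arXiv:1609.08527 — 5 statements merged into one kernel-verified Lean document; each statement's English description precedes it below -/
import Mathlib

section
/- Let u = e^{iυ}, v = e^{iφ} with υ < φ < υ + 2π, and ρ = exp(i(υ+φ+π)/2). Then (1/4)·((u-v)/(uv))·(1+ρ)² = 2 sin((φ-υ)/2) cos²((υ+φ+π)/4), which is a nonnegative real number. -/
/-!
With `m = (υ + φ)/2` and `d = (φ - υ)/2`, factoring out the half-angle exponentials gives
`(u - v)/(u v) = u⁻¹ - v⁻¹ = -2i sin d · e^{-im}` and, since `ρ = i e^{im}`,
`(1 + ρ)² = 4 cos²((υ + φ + π)/4) · i e^{im}`. The phases cancel and `-i · i = 1`;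
nonnegativity holds because `0 < d < π`.
-/

open Complex

namespace Complex

theorem exp_mul_I_sub_div_mul (x y : ℂ) :
    (exp (x * I) - exp (y * I)) / (exp (x * I) * exp (y * I))
      = -I * (2 * sin ((y - x) / 2)) * exp (-((x + y) / 2) * I) := by
  have hlhs : (exp (x * I) - exp (y * I)) / (exp (x * I) * exp (y * I))
      = exp (-y * I) - exp (-x * I) := by
    simp only [neg_mul, exp_neg]
    field_simp
  have hy : exp (-((y - x) / 2) * I) * exp (-((x + y) / 2) * I) = exp (-y * I) := by
    rw [← exp_add]; ring_nf
  have hx : exp ((y - x) / 2 * I) * exp (-((x + y) / 2) * I) = exp (-x * I) := by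
    rw [← exp_add]; ring_nf
  rw [hlhs, two_sin, ← hy, ← hx]
  linear_combination (exp (-((y - x) / 2) * I) - exp ((y - x) / 2 * I))
    * exp (-((x + y) / 2) * I) * I_sq

theorem one_add_exp_mul_I_sq (θ : ℂ) :
    (1 + exp (θ * I)) ^ 2 = 4 * cos (θ / 2) ^ 2 * exp (θ * I) := by
  have hsq : exp (θ * I) = exp (θ / 2 * I) ^ 2 := by
    rw [← exp_nat_mul]; ring_nf
  have hinv : exp (-(θ / 2) * I) = (exp (θ / 2 * I))⁻¹ := by
    rw [neg_mul, exp_neg]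
  rw [show (4 : ℂ) * cos (θ / 2) ^ 2 = (2 * cos (θ / 2)) ^ 2 by ring, two_cos, hinv, hsq]
  field_simp
  ring

end Complex

theorem stmt_2 (υ φ : ℝ) (hlt : υ < φ) (hlt2 : φ < υ + 2 * Real.pi)
    (u v ρ : ℂ)
    (hu : u = Complex.exp (Complex.I * υ))
    (hv : v = Complex.exp (Complex.I * φ))
    (hρ : ρ = Complex.exp (Complex.I * ((υ + φ + Real.pi) / 2))) :
    (1 / 4) * ((u - v) / (u * v)) * (1 + ρ) ^ 2
      = (2 * Real.sin ((φ - υ) / 2) * Real.cos ((υ + φ + Real.pi) / 4) ^ 2 : ℝ) ∧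
    0 ≤ 2 * Real.sin ((φ - υ) / 2) * Real.cos ((υ + φ + Real.pi) / 4) ^ 2 := by
  refine ⟨?_, ?_⟩
  · obtain ⟨m, hm⟩ : ∃ m : ℂ, m = (υ + φ) / 2 := ⟨_, rfl⟩
    have hquotient : (u - v) / (u * v) = -I * (2 * sin ((φ - υ) / 2)) * exp (-m * I) := by
      rw [hu, hv, mul_comm I, mul_comm I, exp_mul_I_sub_div_mul, hm]
    have hrotation : exp (((υ + φ + Real.pi) / 2 : ℂ) * I) = exp (m * I) * I := by
      rw [show ((υ + φ + Real.pi) / 2 : ℂ) * I = m * I + Real.pi / 2 * I by rw [hm]; ring,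
        exp_add, exp_pi_div_two_mul_I]
    have hsquare : (1 + ρ) ^ 2 = 4 * cos ((υ + φ + Real.pi) / 4) ^ 2 * (exp (m * I) * I) := by
      rw [hρ, mul_comm I, one_add_exp_mul_I_sq, hrotation]; ring_nf
    have hunit : exp (-m * I) * exp (m * I) = 1 := by
      rw [← exp_add, neg_mul, neg_add_cancel, exp_zero]
    push_cast
    calc _ = -(I * I) * (exp (-m * I) * exp (m * I))
          * (2 * sin ((φ - υ) / 2) * cos ((υ + φ + Real.pi) / 4) ^ 2) := by
          rw [hquotient, hsquare]; ring
      _ = _ := by rw [I_mul_I, hunit]; ring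
  · have hsin : 0 ≤ Real.sin ((φ - υ) / 2) :=
      Real.sin_nonneg_of_nonneg_of_le_pi (by linarith) (by linarith)
    positivity
end

section
/- Let u = e^{iυ}, v = e^{iφ} with υ < φ < υ + 2π, ρ = exp(i(υ+φ+π)/2), μ = (1/2)(1-ρ^{-1})(u+v). Then μ²/ρ is a nonnegative real number and μ² - 4ρ ∈ ℝ_{≤0}·ρ, i.e., (μ² - 4ρ)/ρ is a nonpositive real number. -/
/-!
Write `θ = (υ + φ)/2` and `α = (φ - υ)/2`, so that `u + v = 2 cos α · e^{iθ}` and `ρ = i e^{iθ}`.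
Then `μ = cos α · (e^{iθ} + i)` and `μ²/ρ = 2 cos² α · (1 + sin θ)`, a real number in `[0, 4]`;
hence `(μ² - 4ρ)/ρ = μ²/ρ - 4` is real and nonpositive.
-/

open Complex

namespace Complex

theorem exp_mul_I_add_exp_mul_I (a b : ℂ) :
    exp (a * I) + exp (b * I) = 2 * cos ((b - a) / 2) * exp ((a + b) / 2 * I) := by
  rw [cos, mul_div_cancel₀ _ two_ne_zero, add_mul, ← exp_add, ← exp_add, add_comm]
  congr 2 <;> ring

theorem sq_exp_mul_I_add_I_div (θ : ℂ) :
    (exp (θ * I) + I) ^ 2 / (I * exp (θ * I)) = 2 * (1 + sin θ) := by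
  rw [sin, neg_mul, exp_neg]
  field_simp
  linear_combination exp (θ * I) ^ 2 * I_sq

end Complex

theorem Real.two_mul_cos_sq_mul_one_add_sin_mem_Icc (α θ : ℝ) :
    2 * Real.cos α ^ 2 * (1 + Real.sin θ) ∈ Set.Icc 0 4 := by
  have := Real.neg_one_le_sin θ
  have := Real.sin_le_one θ
  have := Real.cos_sq_le_one α
  constructor <;> nlinarith [sq_nonneg (Real.cos α)]

theorem stmt_6_general (υ φ : ℝ)
    (u v ρ μ : ℂ)
    (hu : u = Complex.exp (Complex.I * υ))
    (hv : v = Complex.exp (Complex.I * φ))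
    (hρ : ρ = Complex.exp (Complex.I * ((υ + φ + Real.pi) / 2)))
    (hμ : μ = (1 / 2) * (1 - ρ⁻¹) * (u + v)) :
    (∃ r : ℝ, 0 ≤ r ∧ μ ^ 2 / ρ = (r : ℂ)) ∧
    (∃ s : ℝ, s ≤ 0 ∧ (μ ^ 2 - 4 * ρ) / ρ = (s : ℂ)) := by
  set θ : ℝ := (υ + φ) / 2
  set α : ℝ := (φ - υ) / 2
  have hρθ : ρ = I * exp (θ * I) := by
    have harg : I * ((υ + φ + Real.pi) / 2) = θ * I + Real.pi / 2 * I := by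
      push_cast [θ]
      ring
    rw [hρ, harg, exp_add, exp_pi_div_two_mul_I, mul_comm]
  have huv : u + v = 2 * cos α * exp (θ * I) := by
    rw [hu, hv, mul_comm I, mul_comm I, exp_mul_I_add_exp_mul_I]
    push_cast [θ, α]
    ring_nf
  have hμθ : μ = cos α * (exp (θ * I) + I) := by
    rw [hμ, huv, hρθ]
    field_simp
    linear_combination (-cos α) * I_sq
  have hρ0 : ρ ≠ 0 := hρθ ▸ mul_ne_zero I_ne_zero (exp_ne_zero _)
  set r : ℝ := 2 * Real.cos α ^ 2 * (1 + Real.sin θ)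
  have hr : μ ^ 2 / ρ = r := by
    rw [hμθ, hρθ, mul_pow, mul_div_assoc, sq_exp_mul_I_add_I_div]
    push_cast [r]
    ring
  obtain ⟨hr0, hr4⟩ := Real.two_mul_cos_sq_mul_one_add_sin_mem_Icc α θ
  refine ⟨⟨r, hr0, hr⟩, ⟨r - 4, by linarith, ?_⟩⟩
  rw [sub_div, hr, mul_div_cancel_right₀ _ hρ0]
  push_cast
  ring

theorem stmt_6 (υ φ : ℝ) (hlt : υ < φ) (hlt2 : φ < υ + 2 * Real.pi)
    (u v ρ μ : ℂ)
    (hu : u = Complex.exp (Complex.I * υ))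
    (hv : v = Complex.exp (Complex.I * φ))
    (hρ : ρ = Complex.exp (Complex.I * ((υ + φ + Real.pi) / 2)))
    (hμ : μ = (1 / 2) * (1 - ρ⁻¹) * (u + v)) :
    (∃ r : ℝ, 0 ≤ r ∧ μ ^ 2 / ρ = (r : ℂ)) ∧
    (∃ s : ℝ, s ≤ 0 ∧ (μ ^ 2 - 4 * ρ) / ρ = (s : ℂ)) :=
  stmt_6_general υ φ u v ρ μ hu hv hρ hμ
end

section
/- Let α ∈ ℝ and define H(z) = Im(-z - 1/z + iα log z) on the unit circle minus a branch cut. Then for z ∈ ∂𝔻, the outward normal derivative ∂_ν H(z) = (z∂ + z̄∂̄)H(z) equals α - 2 sin(arg z). Consequently, if α = 2 then ∂_ν H > 0 on ∂𝔻 \ {i}, and if α = -2 then ∂_ν H < 0 on ∂𝔻 \ {-i}. -/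
open Complex

/-!
On the ray `r ↦ r e^{iθ}` the harmonic function is the explicit real function
`-r sin θ + sin θ / r + α log r`, whose derivative at `r = 1` is `α - 2 sin θ`.
Since `sin θ ≤ 1` with equality only at `e^{iθ} = i` (and `sin θ ≥ -1` with equality only
at `e^{iθ} = -i`), the sign claims for `α = ±2` follow.
-/

lemma im_neg_sub_inv_add_I_mul_log_ray (α r θ : ℝ) :
    (-(r * exp (I * θ)) - 1 / (r * exp (I * θ)) + I * α * (Real.log r + I * θ)).im =
      -r * Real.sin θ + Real.sin θ / r + α * Real.log r := by
  rw [mul_comm I (θ : ℂ), exp_mul_I, ← ofReal_cos, ← ofReal_sin]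
  simp only [one_div, add_im, sub_im, neg_im, mul_im, inv_im, ofReal_re, ofReal_im, I_re,
    I_im, add_re, mul_re, normSq_mul, normSq_ofReal, normSq_add_mul_I, Real.cos_sq_add_sin_sq]
  rcases eq_or_ne r 0 with rfl | hr
  · simp
  · field_simp
    ring

lemma hasDerivAt_neg_mul_add_div_add_mul_log (α s : ℝ) :
    HasDerivAt (fun r : ℝ => -r * s + s / r + α * Real.log r) (α - 2 * s) 1 := by
  have hlin : HasDerivAt (fun r : ℝ => -r * s) (-s) 1 := by
    simpa using (hasDerivAt_id (1 : ℝ)).neg.mul_const s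
  have hinv : HasDerivAt (fun r : ℝ => s / r) (-s) 1 := by
    simpa [div_eq_mul_inv] using (hasDerivAt_inv one_ne_zero).const_mul s
  have hlog : HasDerivAt (fun r : ℝ => α * Real.log r) α 1 := by
    simpa using (Real.hasDerivAt_log one_ne_zero).const_mul α
  exact ((hlin.add hinv).add hlog).congr_deriv (by ring)

lemma exp_I_mul_eq_sin_mul_I_of_cos_eq_zero {θ : ℝ} (h : Real.cos θ = 0) :
    exp (I * θ) = Real.sin θ * I := by
  rw [mul_comm I (θ : ℂ), exp_mul_I, ← ofReal_cos, ← ofReal_sin, h, ofReal_zero, zero_add]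

lemma sin_lt_one_of_exp_I_mul_ne_I {θ : ℝ} (h : exp (I * θ) ≠ I) : Real.sin θ < 1 := by
  refine (Real.sin_le_one θ).lt_of_ne fun hsin => h ?_
  rw [exp_I_mul_eq_sin_mul_I_of_cos_eq_zero (Real.cos_eq_zero_iff_sin_eq.2 (.inl hsin)), hsin,
    ofReal_one, one_mul]

lemma neg_one_lt_sin_of_exp_I_mul_ne_neg_I {θ : ℝ} (h : exp (I * θ) ≠ -I) :
    -1 < Real.sin θ := by
  refine (Real.neg_one_le_sin θ).lt_of_ne fun hsin => h ?_
  rw [exp_I_mul_eq_sin_mul_I_of_cos_eq_zero (Real.cos_eq_zero_iff_sin_eq.2 (.inr hsin.symm)),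
    ← hsin, ofReal_neg, ofReal_one, neg_one_mul]

/-- The outward normal (radial) derivative of
`H(z) = Im (-z - 1/z + iα log z)` on the unit circle, computed along the ray
`r ↦ r e^{iθ}`, equals `α - 2 sin θ`; consequently it is positive on
`∂𝔻 \ {i}` when `α = 2` and negative on `∂𝔻 \ {-i}` when `α = -2`. -/
theorem stmt_9 (α : ℝ) (θ : ℝ)
    (H : ℝ → ℝ)
    (hH : ∀ r : ℝ, 0 < r →
      H r = Complex.im (-(r * Complex.exp (Complex.I * θ))
        - 1 / (r * Complex.exp (Complex.I * θ))
        + Complex.I * α * (Real.log r + Complex.I * θ))) :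
    deriv H 1 = α - 2 * Real.sin θ ∧
    (α = 2 → Complex.exp (Complex.I * θ) ≠ Complex.I → 0 < deriv H 1) ∧
    (α = -2 → Complex.exp (Complex.I * θ) ≠ -Complex.I → deriv H 1 < 0) := by
  have hH_eq : H =ᶠ[nhds 1] fun r => -r * Real.sin θ + Real.sin θ / r + α * Real.log r := by
    filter_upwards [Ioi_mem_nhds zero_lt_one] with r hr
    rw [hH r hr, im_neg_sub_inv_add_I_mul_log_ray]
  have hderiv : deriv H 1 = α - 2 * Real.sin θ := by
    rw [hH_eq.deriv_eq, (hasDerivAt_neg_mul_add_div_add_mul_log α _).deriv]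
  refine ⟨hderiv, fun hα hθ => ?_, fun hα hθ => ?_⟩
  · linarith [sin_lt_one_of_exp_I_mul_ne_I hθ]
  · linarith [neg_one_lt_sin_of_exp_I_mul_ne_neg_I hθ]
end

section
/- Define F(z,φ) = (1/2)(1-z²)^{1/4}(√(1+z)(cos(φ/2) - sin(φ/2)) + √(1-z)(cos(φ/2) + sin(φ/2))) for z ∈ (-1,1) and φ ∈ ℝ. Then for all such (z,φ) with F_{zz}(z,φ) ≠ 0, (2 F_z(z,φ)·z - 2 F_φ(z,φ)·z/√(1-z²) - F(z,φ)) / F_{zz}(z,φ) = (4/3)(1 - z²). -/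
/-!
For fixed `φ`, `F(·, φ)` is a combination of the Jacobi weights `(1 + z)^p (1 - z)^q` with
`(p, q) = (3/4, 1/4)` and `(1/4, 3/4)`. A weight with `p + q = 1` has logarithmic derivative
`(p - q - z) / (1 - z²)` and solves `(1 - z²)² w'' = ((p - q)² - 1) w`; since `(p - q)² = 1/4` for
both weights, `F_zz = -3F / (4(1 - z²)²)`. Moreover `∂_φ` swaps the roles of the two weights, and
`√(1 - z²)` converts one into the other (`w₁ √(1 - z²) = (1 + z) w₂`, `w₂ √(1 - z²) = (1 - z) w₁`),
which gives `2(1 - z²)(F_z - F_φ / √(1 - z²)) = -z F`. The claimed ratio is then a rational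
identity in `z`, and `F_zz ≠ 0` is exactly `F ≠ 0`.
-/

open Real Set Filter Topology

noncomputable def jacobiWeight (p q x : ℝ) : ℝ := (1 + x) ^ p * (1 - x) ^ q

lemma one_sub_sq_ne_zero_of_mem_Ioo {x : ℝ} (hx : x ∈ Ioo (-1 : ℝ) 1) : 1 - x ^ 2 ≠ 0 := by
  nlinarith [hx.1, hx.2]

section JacobiWeight

variable {p q x : ℝ}

lemma hasDerivAt_jacobiWeight (hx : x ∈ Ioo (-1 : ℝ) 1) :
    HasDerivAt (jacobiWeight p q) (jacobiWeight p q x * (p / (1 + x) - q / (1 - x))) x := by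
  have hu : 0 < 1 + x := by linarith [hx.1]
  have hv : 0 < 1 - x := by linarith [hx.2]
  have hpow_u := ((hasDerivAt_id x).const_add 1).rpow_const (p := p) (Or.inl hu.ne')
  have hpow_v := ((hasDerivAt_id x).const_sub 1).rpow_const (p := q) (Or.inl hv.ne')
  refine (hpow_u.mul hpow_v).congr_deriv ?_
  simp only [jacobiWeight, id, rpow_sub_one hu.ne', rpow_sub_one hv.ne']
  field_simp
  ring

lemma hasDerivAt_jacobiWeight_of_add_eq_one (hpq : p + q = 1) (hx : x ∈ Ioo (-1 : ℝ) 1) :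
    HasDerivAt (jacobiWeight p q) (jacobiWeight p q x * (p - q - x) / (1 - x ^ 2)) x := by
  have hu : 1 + x ≠ 0 := by linarith [hx.1]
  have hv : 1 - x ≠ 0 := by linarith [hx.2]
  obtain rfl : q = 1 - p := by linarith
  refine (hasDerivAt_jacobiWeight hx).congr_deriv ?_
  rw [show 1 - x ^ 2 = (1 + x) * (1 - x) by ring]
  field_simp
  ring

lemma hasDerivAt_deriv_jacobiWeight_of_add_eq_one (hpq : p + q = 1) (hx : x ∈ Ioo (-1 : ℝ) 1) :
    HasDerivAt (fun y => jacobiWeight p q y * (p - q - y) / (1 - y ^ 2))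
      (((p - q) ^ 2 - 1) * jacobiWeight p q x / (1 - x ^ 2) ^ 2) x := by
  have hx2 := one_sub_sq_ne_zero_of_mem_Ioo hx
  have h := ((hasDerivAt_jacobiWeight_of_add_eq_one hpq hx).mul
    ((hasDerivAt_id x).const_sub (p - q))).div ((hasDerivAt_pow 2 x).const_sub 1) hx2
  obtain rfl : q = 1 - p := by linarith
  refine h.congr_deriv ?_
  simp only [Pi.mul_apply, id]
  field_simp
  ring

lemma jacobiWeight_mul_jacobiWeight (hx : x ∈ Ioo (-1 : ℝ) 1) (p' q' : ℝ) :
    jacobiWeight p q x * jacobiWeight p' q' x = jacobiWeight (p + p') (q + q') x := by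
  have hu : 0 < 1 + x := by linarith [hx.1]
  have hv : 0 < 1 - x := by linarith [hx.2]
  simp only [jacobiWeight, rpow_add hu, rpow_add hv]
  ring

lemma jacobiWeight_pos (hx : x ∈ Ioo (-1 : ℝ) 1) : 0 < jacobiWeight p q x := by
  have hu : 0 < 1 + x := by linarith [hx.1]
  have hv : 0 < 1 - x := by linarith [hx.2]
  unfold jacobiWeight
  positivity

lemma jacobiWeight_add_one_left (hx : x ∈ Ioo (-1 : ℝ) 1) :
    jacobiWeight (p + 1) q x = jacobiWeight p q x * (1 + x) := by
  have hu : 0 < 1 + x := by linarith [hx.1]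
  rw [jacobiWeight, jacobiWeight, rpow_add_one hu.ne']
  ring

lemma jacobiWeight_add_one_right (hx : x ∈ Ioo (-1 : ℝ) 1) :
    jacobiWeight p (q + 1) x = jacobiWeight p q x * (1 - x) := by
  have hv : 0 < 1 - x := by linarith [hx.2]
  rw [jacobiWeight, jacobiWeight, rpow_add_one hv.ne']
  ring

lemma one_sub_sq_rpow_eq_jacobiWeight (hx : x ∈ Ioo (-1 : ℝ) 1) (r : ℝ) :
    (1 - x ^ 2) ^ r = jacobiWeight r r x := by
  have hu : 0 ≤ 1 + x := by linarith [hx.1]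
  have hv : 0 ≤ 1 - x := by linarith [hx.2]
  rw [jacobiWeight, ← mul_rpow hu hv]
  ring_nf

lemma sqrt_one_add_eq_jacobiWeight : √(1 + x) = jacobiWeight (1 / 2) 0 x := by
  simp [jacobiWeight, sqrt_eq_rpow]

lemma sqrt_one_sub_eq_jacobiWeight : √(1 - x) = jacobiWeight 0 (1 / 2) x := by
  simp [jacobiWeight, sqrt_eq_rpow]

end JacobiWeight

noncomputable def sleObservable (z φ : ℝ) : ℝ :=
  (1 / 2) * (1 - z ^ 2) ^ ((1 : ℝ) / 4) *
    (√(1 + z) * (cos (φ / 2) - sin (φ / 2)) + √(1 - z) * (cos (φ / 2) + sin (φ / 2)))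

section SleObservable

variable {z φ : ℝ}

lemma sleObservable_eq_jacobiWeight (hz : z ∈ Ioo (-1 : ℝ) 1) :
    sleObservable z φ = (cos (φ / 2) - sin (φ / 2)) / 2 * jacobiWeight (3 / 4) (1 / 4) z
      + (cos (φ / 2) + sin (φ / 2)) / 2 * jacobiWeight (1 / 4) (3 / 4) z := by
  rw [sleObservable, one_sub_sq_rpow_eq_jacobiWeight hz, sqrt_one_add_eq_jacobiWeight,
    sqrt_one_sub_eq_jacobiWeight, mul_assoc, mul_add, ← mul_assoc, ← mul_assoc,
    jacobiWeight_mul_jacobiWeight hz, jacobiWeight_mul_jacobiWeight hz]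
  norm_num
  ring

lemma hasDerivAt_sleObservable (hz : z ∈ Ioo (-1 : ℝ) 1) :
    HasDerivAt (sleObservable · φ)
      (((cos (φ / 2) - sin (φ / 2)) * jacobiWeight (3 / 4) (1 / 4) z * (1 - 2 * z)
        - (cos (φ / 2) + sin (φ / 2)) * jacobiWeight (1 / 4) (3 / 4) z * (1 + 2 * z))
        / (4 * (1 - z ^ 2))) z := by
  have hev : (sleObservable · φ) =ᶠ[𝓝 z] fun x =>
      (cos (φ / 2) - sin (φ / 2)) / 2 * jacobiWeight (3 / 4) (1 / 4) x
        + (cos (φ / 2) + sin (φ / 2)) / 2 * jacobiWeight (1 / 4) (3 / 4) x :=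
    eventually_of_mem (isOpen_Ioo.mem_nhds hz) fun x hx => sleObservable_eq_jacobiWeight hx
  refine HasDerivAt.congr_of_eventuallyEq ?_ hev
  refine (((hasDerivAt_jacobiWeight_of_add_eq_one (by norm_num) hz).const_mul _).add
    ((hasDerivAt_jacobiWeight_of_add_eq_one (by norm_num) hz).const_mul _)).congr_deriv ?_
  have hz2 := one_sub_sq_ne_zero_of_mem_Ioo hz
  field_simp
  ring

lemma deriv_deriv_sleObservable (hz : z ∈ Ioo (-1 : ℝ) 1) :
    deriv (deriv (sleObservable · φ)) z = -3 / (4 * (1 - z ^ 2) ^ 2) * sleObservable z φ := by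
  have hev : deriv (sleObservable · φ) =ᶠ[𝓝 z] fun x =>
      (cos (φ / 2) - sin (φ / 2)) / 2
          * (jacobiWeight (3 / 4) (1 / 4) x * (3 / 4 - 1 / 4 - x) / (1 - x ^ 2))
        + (cos (φ / 2) + sin (φ / 2)) / 2
          * (jacobiWeight (1 / 4) (3 / 4) x * (1 / 4 - 3 / 4 - x) / (1 - x ^ 2)) :=
    eventually_of_mem (isOpen_Ioo.mem_nhds hz) fun x hx => by
      have hx2 := one_sub_sq_ne_zero_of_mem_Ioo hx
      rw [(hasDerivAt_sleObservable hx).deriv]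
      field_simp
      ring
  rw [hev.deriv_eq, sleObservable_eq_jacobiWeight hz]
  refine (((hasDerivAt_deriv_jacobiWeight_of_add_eq_one (by norm_num) hz).const_mul _).add
    ((hasDerivAt_deriv_jacobiWeight_of_add_eq_one (by norm_num) hz).const_mul _)).deriv.trans ?_
  have hz2 := one_sub_sq_ne_zero_of_mem_Ioo hz
  field_simp
  ring

lemma hasDerivAt_sleObservable_angle (z φ : ℝ) :
    HasDerivAt (sleObservable z)
      ((1 / 4) * (1 - z ^ 2) ^ ((1 : ℝ) / 4) *
        (√(1 - z) * (cos (φ / 2) - sin (φ / 2)) - √(1 + z) * (cos (φ / 2) + sin (φ / 2)))) φ := by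
  have hcos : HasDerivAt (fun t => cos (t / 2)) (-sin (φ / 2) * (1 / 2)) φ :=
    ((hasDerivAt_id φ).div_const 2).cos
  have hsin : HasDerivAt (fun t => sin (t / 2)) (cos (φ / 2) * (1 / 2)) φ :=
    ((hasDerivAt_id φ).div_const 2).sin
  refine ((((hcos.sub hsin).const_mul √(1 + z)).add
    ((hcos.add hsin).const_mul √(1 - z))).const_mul
      ((1 / 2) * (1 - z ^ 2) ^ ((1 : ℝ) / 4))).congr_deriv ?_
  ring

lemma deriv_sleObservable_angle (hz : z ∈ Ioo (-1 : ℝ) 1) :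
    deriv (sleObservable z) φ = ((cos (φ / 2) - sin (φ / 2)) * jacobiWeight (1 / 4) (3 / 4) z
      - (cos (φ / 2) + sin (φ / 2)) * jacobiWeight (3 / 4) (1 / 4) z) / 4 := by
  have h₁ : jacobiWeight (1 / 4) (1 / 4) z * jacobiWeight 0 (1 / 2) z
      = jacobiWeight (1 / 4) (3 / 4) z := by
    rw [jacobiWeight_mul_jacobiWeight hz]; norm_num
  have h₂ : jacobiWeight (1 / 4) (1 / 4) z * jacobiWeight (1 / 2) 0 z
      = jacobiWeight (3 / 4) (1 / 4) z := by
    rw [jacobiWeight_mul_jacobiWeight hz]; norm_num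
  rw [(hasDerivAt_sleObservable_angle z φ).deriv, one_sub_sq_rpow_eq_jacobiWeight hz,
    sqrt_one_add_eq_jacobiWeight, sqrt_one_sub_eq_jacobiWeight]
  linear_combination (cos (φ / 2) - sin (φ / 2)) / 4 * h₁ - (cos (φ / 2) + sin (φ / 2)) / 4 * h₂

lemma deriv_sleObservable_sub_deriv_angle_div_sqrt (hz : z ∈ Ioo (-1 : ℝ) 1) :
    2 * (1 - z ^ 2) * (deriv (sleObservable · φ) z - deriv (sleObservable z) φ / √(1 - z ^ 2))
      = -z * sleObservable z φ := by
  have hS : √(1 - z ^ 2) = jacobiWeight (1 / 2) (1 / 2) z := by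
    rw [sqrt_eq_rpow, one_sub_sq_rpow_eq_jacobiWeight hz]
  have h₁ : jacobiWeight (3 / 4) (1 / 4) z * jacobiWeight (1 / 2) (1 / 2) z
      = jacobiWeight (1 / 4) (3 / 4) z * (1 + z) := by
    rw [jacobiWeight_mul_jacobiWeight hz, ← jacobiWeight_add_one_left hz]; norm_num
  have h₂ : jacobiWeight (1 / 4) (3 / 4) z * jacobiWeight (1 / 2) (1 / 2) z
      = jacobiWeight (3 / 4) (1 / 4) z * (1 - z) := by
    rw [jacobiWeight_mul_jacobiWeight hz, ← jacobiWeight_add_one_right hz]; norm_num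
  have hS₀ := (jacobiWeight_pos (p := 1 / 2) (q := 1 / 2) hz).ne'
  have hz₂ := one_sub_sq_ne_zero_of_mem_Ioo hz
  rw [(hasDerivAt_sleObservable hz).deriv, deriv_sleObservable_angle hz, hS,
    sleObservable_eq_jacobiWeight hz]
  field_simp
  linear_combination 4 * (cos (φ / 2) - sin (φ / 2)) * (1 - z) * h₁
    - 4 * (cos (φ / 2) + sin (φ / 2)) * (1 + z) * h₂

end SleObservable

/-- The observable `F(z,φ)` and the SLE drift computation: the combination of
partial derivatives of `F` equals `(4/3)(1 - z²)` whenever `F_zz ≠ 0`. -/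
theorem stmt_10
    (F : ℝ → ℝ → ℝ)
    (hF : ∀ z φ : ℝ, F z φ =
      (1 / 2) * (1 - z ^ 2) ^ ((1 : ℝ) / 4) *
        (Real.sqrt (1 + z) * (Real.cos (φ / 2) - Real.sin (φ / 2)) +
         Real.sqrt (1 - z) * (Real.cos (φ / 2) + Real.sin (φ / 2)))) :
    ∀ z φ : ℝ, -1 < z → z < 1 →
      deriv (deriv (fun z' => F z' φ)) z ≠ 0 →
      (2 * deriv (fun z' => F z' φ) z * z
        - 2 * deriv (fun φ' => F z φ') φ * z / Real.sqrt (1 - z ^ 2)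
        - F z φ) / deriv (deriv (fun z' => F z' φ)) z
      = (4 / 3) * (1 - z ^ 2) := by
  obtain rfl : F = sleObservable := funext₂ hF
  intro z φ hlo hhi hFzz
  have hz : z ∈ Ioo (-1 : ℝ) 1 := ⟨hlo, hhi⟩
  have hsq := one_sub_sq_ne_zero_of_mem_Ioo hz
  rw [deriv_deriv_sleObservable hz] at hFzz ⊢
  rw [div_eq_iff hFzz]
  field_simp
  linear_combination z * deriv_sleObservable_sub_deriv_angle_div_sqrt (φ := φ) hz
end

section
/- With α = 2cos((φ-υ)/2) and β = 2sin((φ-υ)/2)cos²((υ+φ+π)/4), u = e^{iυ}, v = e^{iφ}, υ < φ < υ+2π, the polynomial Q(z) = (-z²+iαz+1)(z-u)(z-v) + β(u-v)z² factors as Q(z) = -(z-m)²(z-n)² where m, n are the roots of z² - μz + ρ with ρ = exp(i(υ+φ+π)/2) and μ = (1/2)(1-ρ^{-1})(u+v); in particular Q has exactly two distinct roots, each of multiplicity two, both on the unit circle. -/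
open Complex ComplexConjugate

/-!
Put `w = exp (iθ)` with `θ = (υ + φ + π) / 4` and `d = exp (iδ)` with `δ = (φ - υ) / 2`. Then
`u = -i w² / d`, `v = -i w² d`, `ρ = w²`, `α = d + d⁻¹`, and `Q z = -(z² - μ z + ρ)²` becomes a
rational identity in `w` and `d`. Moreover `μ = 2 c w` with `c = sin θ cos δ` real and `|c| < 1`,
so `m / w` and `n / w` are the roots of `t² - 2 c t + 1`: a pair of non-real complex conjugates
with product `1`, hence distinct and on the unit circle.
-/

theorem ofReal_cos_eq_exp_add_inv (t : ℝ) :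
    (Real.cos t : ℂ) = (exp (t * I) + (exp (t * I))⁻¹) / 2 := by
  rw [ofReal_cos, cos, ← exp_neg, neg_mul]

theorem ofReal_sin_eq_inv_sub_exp (t : ℝ) :
    (Real.sin t : ℂ) = ((exp (t * I))⁻¹ - exp (t * I)) * I / 2 := by
  rw [ofReal_sin, sin, ← exp_neg, neg_mul]

theorem abs_sin_mul_cos_lt_one (x : ℝ) {y : ℝ} (hy₀ : 0 < y) (hyπ : y < Real.pi) :
    |Real.sin x * Real.cos y| < 1 := by
  have hsin : 0 < Real.sin y := Real.sin_pos_of_pos_of_lt_pi hy₀ hyπ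
  rw [← sq_lt_one_iff_abs_lt_one, mul_pow]
  nlinarith [Real.sin_sq_add_cos_sq x, Real.sin_sq_add_cos_sq y, sq_nonneg (Real.cos y)]

theorem quartic_eq_neg_sq_quadratic {w d u v α β ρ μ : ℂ} (hw : w ≠ 0) (hd : d ≠ 0)
    (hu : u = -I * w ^ 2 / d) (hv : v = -I * w ^ 2 * d) (hρ : ρ = w ^ 2)
    (hα : α = d + d⁻¹) (hβ : β = I * (d⁻¹ - d) * (w + w⁻¹) ^ 2 / 4)
    (hμ : μ = 1 / 2 * (1 - ρ⁻¹) * (u + v)) (z : ℂ) :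
    (-z ^ 2 + I * α * z + 1) * (z - u) * (z - v) + β * (u - v) * z ^ 2
      = -(z ^ 2 - μ * z + ρ) ^ 2 := by
  subst hu hv hρ hα hβ hμ
  field_simp
  ring_nf
  simp only [I_sq, I_pow_three]
  ring

theorem norm_eq_one_of_add_eq_two_mul_of_mul_eq_one {p q : ℂ} {c : ℝ} (hc : |c| < 1)
    (hsum : p + q = 2 * c) (hprod : p * q = 1) : ‖p‖ = 1 ∧ ‖q‖ = 1 ∧ p ≠ q := by
  obtain rfl : q = 2 * c - p := by linear_combination hsum
  have hre : p.re * (2 * c - p.re) + p.im * p.im = 1 := by simpa using congrArg re hprod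
  have him : p.im * (c - p.re) = 0 := by
    have h := congrArg im hprod
    simp only [mul_im, sub_im, sub_re, mul_re, ofReal_re, ofReal_im, re_ofNat, im_ofNat,
      one_im] at h
    linear_combination h / 2
  have him_ne : p.im ≠ 0 := by
    intro h
    rw [h] at hre
    nlinarith [abs_lt.mp hc, sq_nonneg (p.re - c)]
  have hre_eq : p.re = c := by
    linarith [(mul_eq_zero.mp him).resolve_left him_ne]
  have hconj : 2 * c - p = conj p := Complex.ext (by simp [hre_eq]; ring) (by simp)
  rw [hconj] at hprod ⊢
  have hp : ‖p‖ = 1 := by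
    rw [mul_conj, normSq_eq_norm_sq] at hprod
    exact (pow_eq_one_iff_of_nonneg (norm_nonneg p) two_ne_zero).mp (by exact_mod_cast hprod)
  exact ⟨hp, by rwa [norm_conj], fun h => him_ne (conj_eq_iff_im.mp h.symm)⟩

theorem norm_eq_one_of_add_eq_two_mul_of_mul_eq_sq {m n w : ℂ} {c : ℝ} (hc : |c| < 1)
    (hw : ‖w‖ = 1) (hsum : m + n = 2 * c * w) (hprod : m * n = w ^ 2) :
    ‖m‖ = 1 ∧ ‖n‖ = 1 ∧ m ≠ n := by
  have hw₀ : w ≠ 0 := norm_ne_zero_iff.mp (by rw [hw]; exact one_ne_zero)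
  obtain ⟨hm, hn, hmn⟩ := norm_eq_one_of_add_eq_two_mul_of_mul_eq_one (p := m / w) (q := n / w) hc
    (by field_simp; linear_combination hsum) (by field_simp; exact hprod)
  rw [norm_div, hw, div_one] at hm hn
  exact ⟨hm, hn, fun h => hmn (by rw [h])⟩

/-- With the coefficients `α`, `β` of the observable, the polynomial `Q`
factors as `-(z-m)²(z-n)²` where `m`, `n` are the roots of `z² - μz + ρ`;
the two roots are distinct and lie on the unit circle. -/
theorem stmt_15 (υ φ : ℝ) (hlt : υ < φ) (hlt2 : φ < υ + 2 * Real.pi)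
    (u v ρ μ m n : ℂ) (α β : ℝ)
    (hu : u = Complex.exp (Complex.I * υ))
    (hv : v = Complex.exp (Complex.I * φ))
    (hα : (α : ℝ) = 2 * Real.cos ((φ - υ) / 2))
    (hβ : (β : ℝ) = 2 * Real.sin ((φ - υ) / 2) * Real.cos ((υ + φ + Real.pi) / 4) ^ 2)
    (hρ : ρ = Complex.exp (Complex.I * ((υ + φ + Real.pi) / 2)))
    (hμ : μ = (1 / 2) * (1 - ρ⁻¹) * (u + v))
    (hsum : m + n = μ) (hprod : m * n = ρ) :
    (∀ z : ℂ,
      (-z ^ 2 + Complex.I * (α : ℂ) * z + 1) * (z - u) * (z - v)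
          + (β : ℂ) * (u - v) * z ^ 2
        = -((z - m) ^ 2 * (z - n) ^ 2)) ∧
    m ≠ n ∧ ‖m‖ = 1 ∧ ‖n‖ = 1 := by
  set θ : ℝ := (υ + φ + Real.pi) / 4
  set δ : ℝ := (φ - υ) / 2 with hδ
  set w := exp (θ * I)
  set d := exp (δ * I)
  have hw : w ≠ 0 := exp_ne_zero _
  have hd : d ≠ 0 := exp_ne_zero _
  have hρw : ρ = w ^ 2 := by
    rw [hρ, ← exp_nat_mul]; congr 1; push_cast [θ]; ring
  have huw : u = -I * w ^ 2 / d := by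
    rw [hu, ← exp_neg_pi_div_two_mul_I, ← exp_nat_mul, ← exp_add, ← exp_sub]
    congr 1; push_cast [θ, δ]; ring
  have hvw : v = -I * w ^ 2 * d := by
    rw [hv, ← exp_neg_pi_div_two_mul_I, ← exp_nat_mul, ← exp_add, ← exp_add]
    congr 1; push_cast [θ, δ]; ring
  have hcosθ : (Real.cos θ : ℂ) = (w + w⁻¹) / 2 := ofReal_cos_eq_exp_add_inv θ
  have hsinθ : (Real.sin θ : ℂ) = (w⁻¹ - w) * I / 2 := ofReal_sin_eq_inv_sub_exp θ
  have hcosδ : (Real.cos δ : ℂ) = (d + d⁻¹) / 2 := ofReal_cos_eq_exp_add_inv δ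
  have hsinδ : (Real.sin δ : ℂ) = (d⁻¹ - d) * I / 2 := ofReal_sin_eq_inv_sub_exp δ
  have hαd : (α : ℂ) = d + d⁻¹ := by
    rw [hα, ofReal_mul, hcosδ]; push_cast; ring
  have hβdw : (β : ℂ) = I * (d⁻¹ - d) * (w + w⁻¹) ^ 2 / 4 := by
    rw [hβ, ofReal_mul, ofReal_mul, ofReal_pow, hsinδ, hcosθ]; push_cast; ring
  have hμw : μ = 2 * (Real.sin θ * Real.cos δ : ℝ) * w := by
    rw [hμ, hρw, huw, hvw, ofReal_mul, hsinθ, hcosδ]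
    field_simp
    ring
  have hc := abs_sin_mul_cos_lt_one θ (y := δ) (by linarith) (by linarith)
  obtain ⟨hm, hn, hmn⟩ := norm_eq_one_of_add_eq_two_mul_of_mul_eq_sq hc
    (norm_exp_ofReal_mul_I θ) (hsum.trans hμw) (hprod.trans hρw)
  refine ⟨fun z => ?_, hmn, hm, hn⟩
  rw [quartic_eq_neg_sq_quadratic hw hd huw hvw hρw hαd hβdw hμ z,
    ← hsum, ← hprod]
  ring
end
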